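/- arXiv:0812.3434 — 6 statements merged into one kernel-verified Lean document; each statement's English description precedes it below -/
import Mathlib

section
/- If T₂ is a well-founded tree and λ : T₁ → T₂ is a weakly finite injury map, then T₁ is well-founded. -/
/-!
Along an infinite branch of `T₁` the second clause of weak finite injury lets us pass to a
subsequence on which `l` changes at every step; by the first clause, the images then form a
sequence in `T₂` each of whose terms properly extends its predecessor or corrects one of its `?`
labels to a numeral. In such a sequence the entry at every position stabilises: once the first
`p` entries are fixed, later injuries occur at positions `≥ p`, so the length eventually exceeds
`p`, after which entry `p` can only change from `?` to a numeral, and then never again. The limit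
values form an infinite branch of `T₂`.
-/

/-- Nodes of our trees: finite sequences over the label set `ℕ ∪ {?}`,
with `none` playing the role of `?`. -/
abbrev Node := List (Option ℕ)

/-- A tree is a set of finite sequences closed under initial segments. -/
def IsTree (T : Set Node) : Prop := ∀ x y : Node, x <+: y → y ∈ T → x ∈ T

/-- Strict extension ordering: `y` properly extends `x`. -/
def SPrefix (x y : Node) : Prop := x <+: y ∧ x ≠ y

/-- A tree is well-founded if it has no infinite branch `x₁ ⊊ x₂ ⊊ ⋯`. -/
def TreeWF (T : Set Node) : Prop :=
  ¬ ∃ f : ℕ → Node, (∀ n, f n ∈ T) ∧ ∀ n, SPrefix (f n) (f (n + 1))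

/-- The "injury" alternative: some node `a` followed by `?` in `s` is
corrected to a natural-number label in `t`. -/
def Injury (s t : Node) : Prop :=
  ∃ (a : Node) (u : ℕ), (a ++ [none]) <+: s ∧ (a ++ [some u]) <+: t

/-- `l` is a finite injury map on `T₁`: whenever `x ⊊ y`, either `l x ⊊ l y`,
or some `?`-branch of `l x` is corrected to a numeral branch in `l y`. -/
def FiniteInjury (T₁ : Set Node) (l : Node → Node) : Prop :=
  ∀ x ∈ T₁, ∀ y ∈ T₁, SPrefix x y → SPrefix (l x) (l y) ∨ Injury (l x) (l y)

/-- `l` is weakly finite injury: whenever `x ⊆ y`, either `l x ⊆ l y` or an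
injury occurs, and for every `x` there is an `n` such that any strict chain of
length `n` in `T₁` starting at `x` forces `l` to change value. -/
def WeaklyFiniteInjury (T₁ : Set Node) (l : Node → Node) : Prop :=
  (∀ x ∈ T₁, ∀ y ∈ T₁, x <+: y → l x <+: l y ∨ Injury (l x) (l y)) ∧
  (∀ x ∈ T₁, ∃ n : ℕ, ∀ c : ℕ → Node, c 0 = x → (∀ i, c i ∈ T₁) →
      (∀ i < n, SPrefix (c i) (c (i + 1))) → l (c 0) ≠ l (c n))

open Filter List

def Advances (s t : Node) : Prop := SPrefix s t ∨ Injury s t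

lemma SPrefix.length_lt {x y : Node} (h : SPrefix x y) : x.length < y.length :=
  lt_of_le_of_ne h.1.length_le fun he => h.2 (h.1.eq_of_length he)

lemma getElem?_of_prefix {α : Type*} {b t : List α} (h : b <+: t) {i : ℕ} (hi : i < b.length) :
    t[i]? = b[i]? := by
  obtain ⟨s, rfl⟩ := h
  exact getElem?_append_left hi

lemma append_singleton_prefix {α : Type*} {b t : List α} {w : α} (h : b <+: t)
    (hw : t[b.length]? = some w) : b ++ [w] <+: t := by
  obtain ⟨s, rfl⟩ := h
  cases s with
  | nil => simp at hw
  | cons v s =>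
    obtain rfl : v = w := by simpa using hw
    exact ⟨s, by simp⟩

lemma length_le_of_injury {a b s t : Node} {u : ℕ} (hs : a ++ [none] <+: s)
    (ht : a ++ [some u] <+: t) (hbs : b <+: s) (hbt : b <+: t) : b.length ≤ a.length := by
  by_contra! hlt
  have hs' := getElem?_of_prefix hs (i := a.length) (by simp)
  have ht' := getElem?_of_prefix ht (i := a.length) (by simp)
  rw [getElem?_of_prefix hbs hlt] at hs'
  rw [getElem?_of_prefix hbt hlt, hs'] at ht'
  simp at ht'

lemma Advances.getElem?_eq_some_none_or_eq {b s t : Node} (hst : Advances s t)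
    (hbs : b <+: s) (hbt : b <+: t) (hlen : b.length < s.length) :
    s[b.length]? = some none ∨ t[b.length]? = s[b.length]? := by
  rcases hst with hs | ⟨a, u, hs, ht⟩
  · exact Or.inr (getElem?_of_prefix hs.1 hlen)
  · rcases (length_le_of_injury hs ht hbs hbt).eq_or_lt with he | hlt
    · left
      rw [he, getElem?_of_prefix hs (by simp)]
      simp
    · right
      rw [getElem?_of_prefix ((prefix_append _ _).trans ht) hlt,
        getElem?_of_prefix ((prefix_append _ _).trans hs) hlt]

lemma eventually_le_of_eventually_min_le {x : ℕ → ℕ} {c : ℕ}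
    (h : ∀ᶠ n in atTop, min c (x n + 1) ≤ x (n + 1)) : ∀ᶠ n in atTop, c ≤ x n := by
  obtain ⟨N, hN⟩ := eventually_atTop.1 h
  have hgrow : ∀ n ≥ N, min c (x N + (n - N)) ≤ x n := by
    intro n hn
    induction n, hn using Nat.le_induction with
    | base => simp
    | succ n hn ih => have := hN n hn; omega
  exact eventually_atTop.2 ⟨N + c, fun n hn => by have := hgrow n (by omega); omega⟩

lemma exists_eventually_eq_of_eventually_eq_or_succ_eq {α : Type*} {e : ℕ → α} {a : α}
    (h : ∀ᶠ n in atTop, e n = a ∨ e (n + 1) = e n) : ∃ v, ∀ᶠ n in atTop, e n = v := by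
  obtain ⟨N, hN⟩ := eventually_atTop.1 h
  by_cases hc : ∃ n ≥ N, e n ≠ a
  · obtain ⟨n, hn, hne⟩ := hc
    refine ⟨e n, eventually_atTop.2 ⟨n, fun m hm => ?_⟩⟩
    induction m, hm using Nat.le_induction with
    | base => rfl
    | succ m hm ih =>
      rcases hN m (by omega) with ha | hsucc
      · exact absurd (ih.symm.trans ha) hne
      · rw [hsucc, ih]
  · push Not at hc
    exact ⟨a, eventually_atTop.2 ⟨N, hc⟩⟩

section AdvancingSequence

variable {h : ℕ → Node} (hadv : ∀ n, Advances (h n) (h (n + 1)))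
include hadv

lemma eventually_length_gt {b : Node} (hb : ∀ᶠ n in atTop, b <+: h n) :
    ∀ᶠ n in atTop, b.length < (h n).length := by
  refine eventually_le_of_eventually_min_le ?_
  filter_upwards [hb, (tendsto_add_atTop_nat 1).eventually hb] with n hn hn1
  rcases hadv n with hs | ⟨a, u, hs, ht⟩
  · have := hs.length_lt
    omega
  · have := length_le_of_injury hs ht hn hn1
    have := ht.length_le
    simp only [length_append, length_singleton] at this
    omega

lemma exists_eventually_prefix (p : ℕ) :
    ∃ b : Node, b.length = p ∧ ∀ᶠ n in atTop, b <+: h n := by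
  induction p with
  | zero => exact ⟨[], rfl, Eventually.of_forall fun _ => nil_prefix⟩
  | succ p ih =>
    obtain ⟨b, rfl, hb⟩ := ih
    have hlen := eventually_length_gt hadv hb
    obtain ⟨v, hv⟩ := exists_eventually_eq_of_eventually_eq_or_succ_eq
      (e := fun n => (h n)[b.length]?) (a := some none) <| by
        filter_upwards [hb, (tendsto_add_atTop_nat 1).eventually hb, hlen] with n hn hn1 hl
        exact (hadv n).getElem?_eq_some_none_or_eq hn hn1 hl
    obtain ⟨n, hvn, hln⟩ := (hv.and hlen).exists
    rw [getElem?_eq_getElem hln] at hvn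
    subst hvn
    refine ⟨b ++ [(h n)[b.length]], by simp, ?_⟩
    filter_upwards [hb, hv] with m hbm hvm
    exact append_singleton_prefix hbm hvm

lemma not_treeWF_of_advances {T : Set Node} (hT : IsTree T) (hmem : ∀ n, h n ∈ T) :
    ¬ TreeWF T := by
  choose b hlen hb using exists_eventually_prefix hadv
  refine fun hwf => hwf ⟨b, fun p => ?_, fun p => ?_⟩
  · obtain ⟨n, hn⟩ := (hb p).exists
    exact hT _ _ hn (hmem n)
  · obtain ⟨n, h₁, h₂⟩ := ((hb p).and (hb (p + 1))).exists
    refine ⟨prefix_of_prefix_length_le h₁ h₂ (by rw [hlen, hlen]; omega), fun he => ?_⟩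
    have := congrArg length he
    rw [hlen, hlen] at this
    omega

end AdvancingSequence

lemma WeaklyFiniteInjury.exists_advances_subseq {T₁ : Set Node} {l : Node → Node}
    (hfi : WeaklyFiniteInjury T₁ l) {f : ℕ → Node} (hfT : ∀ n, f n ∈ T₁)
    (hfs : ∀ n, SPrefix (f n) (f (n + 1))) :
    ∃ φ : ℕ → ℕ, ∀ j, Advances (l (f (φ j))) (l (f (φ (j + 1)))) := by
  have hmono : ∀ m n, m ≤ n → f m <+: f n := by
    intro m n hmn
    induction n, hmn using Nat.le_induction with
    | base => exact prefix_refl _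
    | succ n _ ih => exact ih.trans (hfs n).1
  have hjump : ∀ n, ∃ m, n < m ∧ l (f n) ≠ l (f m) := by
    intro n
    obtain ⟨k, hk⟩ := hfi.2 (f n) (hfT n)
    have hne : l (f n) ≠ l (f (n + k)) := by
      simpa using hk (fun i => f (n + i)) rfl (fun _ => hfT _) (fun _ _ => hfs _)
    refine ⟨n + k, Nat.lt_add_of_pos_right (Nat.pos_of_ne_zero ?_), hne⟩
    rintro rfl
    exact hne rfl
  choose m hlt hne using hjump
  refine ⟨fun j => m^[j] 0, fun j => ?_⟩
  simp only [Function.iterate_succ_apply']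
  rcases hfi.1 _ (hfT _) _ (hfT _) (hmono _ _ (hlt _).le) with hp | hi
  · exact Or.inl ⟨hp, hne _⟩
  · exact Or.inr hi

theorem stmt0_general (T₁ T₂ : Set Node) (hT₂ : IsTree T₂)
    (l : Node → Node) (hmap : ∀ x ∈ T₁, l x ∈ T₂)
    (hwf : TreeWF T₂) (hfi : WeaklyFiniteInjury T₁ l) :
    TreeWF T₁ := by
  rintro ⟨f, hfT, hfs⟩
  obtain ⟨φ, hφ⟩ := hfi.exists_advances_subseq hfT hfs
  exact not_treeWF_of_advances hφ hT₂ (fun _ => hmap _ (hfT _)) hwf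

/-- If `T₂` is a well-founded tree and `l : T₁ → T₂` is weakly finite injury,
then `T₁` is well-founded. -/
theorem stmt0 (T₁ T₂ : Set Node) (hT₁ : IsTree T₁) (hT₂ : IsTree T₂)
    (l : Node → Node) (hmap : ∀ x ∈ T₁, l x ∈ T₂)
    (hwf : TreeWF T₂) (hfi : WeaklyFiniteInjury T₁ l) :
    TreeWF T₁ :=
  stmt0_general T₁ T₂ hT₂ l hmap hwf hfi
end

section
/- A map λ : T₁ → T₂ is a finite injury relationship if and only if λ is order-preserving from the strict extension ordering on T₁ to the Kleene–Brouwer ordering on T₂, where the label set ℕ ∪ {?} is ordered by u < ? for all u ∈ ℕ (and labels in ℕ are incomparable with each other, or ordered arbitrarily consistently). -/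
/-- The order on labels `ℕ ∪ {?}`: every natural number is below `?`,
and naturals are mutually incomparable. -/
def LabelLt (a b : Option ℕ) : Prop := a ≠ none ∧ b = none

/-- The Kleene–Brouwer ordering: `s <_KB t` iff `s` properly extends `t`, or at
the first position where they differ the entry of `s` is below that of `t`. -/
def KB (s t : Node) : Prop :=
  SPrefix t s ∨ ∃ (a : Node) (x y : Option ℕ) (s' t' : Node),
    s = a ++ x :: s' ∧ t = a ++ y :: t' ∧ LabelLt x y

theorem injury_iff_exists_labelLt (s t : Node) :
    Injury s t ↔ ∃ (a : Node) (x y : Option ℕ) (t' s' : Node),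
      t = a ++ x :: t' ∧ s = a ++ y :: s' ∧ LabelLt x y := by
  constructor
  · rintro ⟨a, u, ⟨s', rfl⟩, ⟨t', rfl⟩⟩
    exact ⟨a, some u, none, t', s', by simp, by simp, Option.some_ne_none u, rfl⟩
  · rintro ⟨a, x, y, t', s', rfl, rfl, hx, rfl⟩
    obtain ⟨u, rfl⟩ := Option.ne_none_iff_exists'.mp hx
    exact ⟨a, u, ⟨s', by simp⟩, ⟨t', by simp⟩⟩

theorem sPrefix_or_injury_iff_kb (s t : Node) : SPrefix s t ∨ Injury s t ↔ KB t s := by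
  rw [injury_iff_exists_labelLt, KB]

/-- `l` is a finite injury relationship iff `l` is order preserving from the
strict extension ordering on `T₁` to the Kleene–Brouwer ordering on `T₂`. -/
theorem stmt2 (T₁ : Set Node) (l : Node → Node) :
    FiniteInjury T₁ l ↔ ∀ x ∈ T₁, ∀ y ∈ T₁, SPrefix x y → KB (l y) (l x) := by
  simp only [FiniteInjury, sPrefix_or_injury_iff_kb]
end

section
/- If a tree T₂ has height bounded by ordinal α and f : T₁ → T₂ is a finite injury map, then T₁ has height bounded by ω^α; that is, there is a function o : T₁ → ω^α with x ⊊ y implying o(y) < o(x). -/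
open Ordinal in
/-- The ordinal sum `Σ_{a⌢⟨?⟩ ⊆ t} ω^{h a}`, taken in order of increasing length of `a`. -/
noncomputable def osum (h : Node → Ordinal) (t : Node) : Ordinal :=
  ((List.range t.length).filter fun i => t[i]? == some none).foldr
    (fun i acc => Ordinal.omega0 ^ h (t.take i) + acc) 0

open Ordinal in
noncomputable def oFun (h : Node → Ordinal) (f : Node → Node) (x : Node) : Ordinal :=
  osum h (f x) + Ordinal.omega0 ^ (h (f x) + 1)

/-!
Rank a node `t` of `T₂` by `Σ_{a⌢⟨?⟩ ⊆ t} ω^{h a} + ω^{h t}·2`. Extending `t` by one letter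
adds at most `ω^{h t}` to the sum and replaces `ω^{h t}·2` by the smaller `ω^{h(t⌢c)}·2`, so
the rank drops along proper extensions. An injury at `a⌢⟨?⟩` loses the summand `ω^{h a}`, which
dominates the whole rank of any node extending `a⌢⟨u⟩`. Hence `x ↦ rank (f x)` decreases along
`T₁`, and it stays below `ω^α` because all exponents are `< α` and `ω^α` is additively principal.
-/

open Ordinal

lemma foldr_add_eq_sum_map_add (c : ℕ → Ordinal) (l : List ℕ) (X : Ordinal) :
    l.foldr (fun i acc => c i + acc) X = (l.map c).sum + X := by
  induction l with
  | nil => simp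
  | cons i l ih => simp [ih, add_assoc]

lemma osum_eq_sum (h : Node → Ordinal) (t : Node) :
    osum h t = (((List.range t.length).filter fun i => t[i]? == some none).map
      fun i => ω ^ h (t.take i)).sum := by
  rw [osum, foldr_add_eq_sum_map_add, add_zero]

lemma osum_concat (h : Node → Ordinal) (t : Node) (c : Option ℕ) :
    osum h (t ++ [c]) = osum h t + if c = none then ω ^ h t else 0 := by
  have hinit : ((List.range t.length).filter fun i => (t ++ [c])[i]? == some none).map
      (fun i => ω ^ h ((t ++ [c]).take i)) =
      ((List.range t.length).filter fun i => t[i]? == some none).map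
      (fun i => ω ^ h (t.take i)) := by
    rw [List.filter_congr fun i hi => by
      rw [List.getElem?_append_left (List.mem_range.1 hi)]]
    refine List.map_congr_left fun i hi => ?_
    rw [List.take_append_of_le_length (List.mem_range.1 (List.mem_of_mem_filter hi)).le]
  rw [osum_eq_sum, osum_eq_sum, List.length_append, List.length_singleton, List.range_succ,
    List.filter_append, List.map_append, List.sum_append, hinit]
  cases c <;> simp

lemma osum_le_osum_concat (h : Node → Ordinal) (t : Node) (c : Option ℕ) :
    osum h t ≤ osum h (t ++ [c]) := by
  rw [osum_concat]
  exact le_self_add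

lemma osum_concat_le (h : Node → Ordinal) (t : Node) (c : Option ℕ) :
    osum h (t ++ [c]) ≤ osum h t + ω ^ h t := by
  rw [osum_concat]
  split_ifs
  · rfl
  · simp

lemma osum_mono (h : Node → Ordinal) {s t : Node} (hst : s <+: t) : osum h s ≤ osum h t := by
  obtain ⟨r, rfl⟩ := hst
  induction r using List.reverseRecOn with
  | nil => simp
  | append_singleton r c ih =>
    rw [← List.append_assoc]
    exact ih.trans (osum_le_osum_concat h _ c)

lemma opow_mul_two_lt {a b : Ordinal} (hab : a < b) : ω ^ a * 2 < ω ^ b :=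
  opow_mul_lt_opow (natCast_lt_omega0 2) hab

lemma sprefix_concat (t : Node) (c : Option ℕ) : SPrefix t (t ++ [c]) :=
  ⟨List.prefix_append t [c], by simp⟩

-- `oFun`'s tail `ω ^ (h t + 1)` can reach `ω ^ α`; two copies of `ω ^ h t` cannot.
noncomputable def nodeRank (h : Node → Ordinal) (t : Node) : Ordinal :=
  osum h t + ω ^ h t * 2

lemma nodeRank_concat_lt {h : Node → Ordinal} {t : Node} {c : Option ℕ}
    (hlt : h (t ++ [c]) < h t) : nodeRank h (t ++ [c]) < nodeRank h t :=
  calc osum h (t ++ [c]) + ω ^ h (t ++ [c]) * 2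
      ≤ osum h t + ω ^ h t + ω ^ h (t ++ [c]) * 2 := add_le_add_left (osum_concat_le h t c) _
    _ < osum h t + ω ^ h t + ω ^ h t := add_lt_add_right (opow_mul_two_lt hlt) _
    _ = nodeRank h t := by rw [nodeRank, Ordinal.mul_two, add_assoc]

section Tree

variable {T : Set Node} {h : Node → Ordinal}

lemma nodeRank_lt_opow (hT : IsTree T) {α : Ordinal} (hbd : ∀ t ∈ T, h t < α) {t : Node}
    (ht : t ∈ T) : nodeRank h t < ω ^ α := by
  have hosum : osum h t < ω ^ α := by
    induction t using List.reverseRecOn with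
    | nil => simpa [osum] using opow_pos α omega0_pos
    | append_singleton t c ih =>
      have ht' : t ∈ T := hT _ _ (List.prefix_append t [c]) ht
      exact (osum_concat_le h t c).trans_lt (isPrincipal_add_omega0_opow α (ih ht')
        ((opow_lt_opow_iff_right one_lt_omega0).2 (hbd t ht')))
  exact isPrincipal_add_omega0_opow α hosum (opow_mul_two_lt (hbd t ht))

variable (hT : IsTree T) (hdec : ∀ s ∈ T, ∀ t ∈ T, SPrefix s t → h t < h s)
include hT hdec

lemma nodeRank_lt_of_sprefix {s t : Node} (hst : SPrefix s t) (ht : t ∈ T) :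
    nodeRank h t < nodeRank h s := by
  induction t using List.reverseRecOn with
  | nil => exact absurd (List.prefix_nil.1 hst.1) hst.2
  | append_singleton t c ih =>
    have ht' : t ∈ T := hT _ _ (List.prefix_append t [c]) ht
    have hstep := nodeRank_concat_lt (hdec t ht' _ ht (sprefix_concat t c))
    rcases List.prefix_concat_iff.1 hst.1 with rfl | hst'
    · exact absurd rfl hst.2
    · rcases eq_or_ne s t with rfl | hne
      · exact hstep
      · exact hstep.trans (ih ⟨hst', hne⟩ ht')

lemma nodeRank_le_of_prefix {s t : Node} (hst : s <+: t) (ht : t ∈ T) :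
    nodeRank h t ≤ nodeRank h s := by
  rcases eq_or_ne s t with rfl | hne
  · rfl
  · exact (nodeRank_lt_of_sprefix hT hdec ⟨hst, hne⟩ ht).le

lemma nodeRank_lt_of_injury {s t : Node} (hinj : Injury s t) (ht : t ∈ T) :
    nodeRank h t < nodeRank h s := by
  obtain ⟨a, u, has, hat⟩ := hinj
  have hau : a ++ [some u] ∈ T := hT _ _ hat ht
  have ha : a ∈ T := hT _ _ (List.prefix_append _ _) hau
  have hlt : h (a ++ [some u]) < h a := hdec a ha _ hau (sprefix_concat a _)
  calc nodeRank h t ≤ nodeRank h (a ++ [some u]) := nodeRank_le_of_prefix hT hdec hat ht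
    _ = osum h a + ω ^ h (a ++ [some u]) * 2 := by rw [nodeRank, osum_concat]; simp
    _ < osum h a + ω ^ h a := add_lt_add_right (opow_mul_two_lt hlt) _
    _ = osum h (a ++ [none]) := by rw [osum_concat]; simp
    _ ≤ osum h s := osum_mono h has
    _ ≤ nodeRank h s := le_self_add

end Tree

theorem stmt4_general (T₁ T₂ : Set Node) (hT₂ : IsTree T₂)
    (f : Node → Node) (hmap : ∀ x ∈ T₁, f x ∈ T₂) (hfi : FiniteInjury T₁ f)
    (α : Ordinal) (h : Node → Ordinal)
    (hbd : ∀ t ∈ T₂, h t < α)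
    (hdec : ∀ s ∈ T₂, ∀ t ∈ T₂, SPrefix s t → h t < h s) :
    ∃ o : Node → Ordinal, (∀ x ∈ T₁, o x < Ordinal.omega0 ^ α) ∧
      ∀ x ∈ T₁, ∀ y ∈ T₁, SPrefix x y → o y < o x := by
  refine ⟨fun x => nodeRank h (f x), fun x hx => nodeRank_lt_opow hT₂ hbd (hmap x hx), ?_⟩
  intro x hx y hy hxy
  rcases hfi x hx y hy hxy with hlt | hinj
  · exact nodeRank_lt_of_sprefix hT₂ hdec hlt (hmap y hy)
  · exact nodeRank_lt_of_injury hT₂ hdec hinj (hmap y hy)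

/-- If `T₂` has height bounded by `α` and `f : T₁ → T₂` is finite injury, then
`T₁` has height bounded by `ω^α`: there is `o : T₁ → ω^α` with `x ⊊ y`
implying `o y < o x`. -/
theorem stmt4 (T₁ T₂ : Set Node) (hT₁ : IsTree T₁) (hT₂ : IsTree T₂)
    (f : Node → Node) (hmap : ∀ x ∈ T₁, f x ∈ T₂) (hfi : FiniteInjury T₁ f)
    (α : Ordinal) (h : Node → Ordinal)
    (hbd : ∀ t ∈ T₂, h t < α)
    (hdec : ∀ s ∈ T₂, ∀ t ∈ T₂, SPrefix s t → h t < h s) :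
    ∃ o : Node → Ordinal, (∀ x ∈ T₁, o x < Ordinal.omega0 ^ α) ∧
      ∀ x ∈ T₁, ∀ y ∈ T₁, SPrefix x y → o y < o x :=
  stmt4_general T₁ T₂ hT₂ f hmap hfi α h hbd hdec
end

section
/- If an ε-substitution S does not decide a closed formula φ (i.e., neither S ⊨ φ nor S ⊨ ¬φ), then unev(φ, S) is non-empty, where unev(φ, S) is the set of subterms c(s⃗) of φ such that every Ŝ(sᵢ) is a numeral but Ŝ(c(s⃗)) is not a numeral. -/
/-! Whenever the value of a term is not a numeral, descending into a non-numeral argument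
ends at an ε-term whose arguments all have numeral values but which itself does not.
An atomic formula whose terms all have numeral values is decided, and if a compound
formula is undecided then so is one of its immediate subformulas. -/

inductive ETerm : Type where
  | zero : ETerm
  | succ : ETerm → ETerm
  | skolem : ℕ → List ETerm → ETerm

def numeral : ℕ → ETerm
  | 0 => .zero
  | n + 1 => .succ (numeral n)

def toNum : ETerm → Option ℕ
  | .zero => some 0
  | .succ t => (toNum t).map (· + 1)
  | .skolem _ _ => none

/-- An ε-substitution: `S c ns = none` means the canonical term `c(ns)` is not in
the domain; `some none` means it gets the default value `?`; `some (some v)` means value `v`. -/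
abbrev EpsSubst := ℕ → List ℕ → Option (Option ℕ)

def eval (S : EpsSubst) : ETerm → ETerm
  | .zero => .zero
  | .succ t => .succ (eval S t)
  | .skolem c args =>
      let args' := args.attach.map fun a => eval S a.1
      match args'.mapM toNum with
      | some ns =>
          match S c ns with
          | some (some v) => numeral v
          | some none => .zero
          | none => .skolem c (ns.map numeral)
      | none => .skolem c args'
termination_by t => t
decreasing_by
  all_goals simp_wf
  all_goals exact Nat.lt_of_lt_of_le (List.sizeOf_lt_of_mem a.2) (by omega)

inductive EFormula : Type where
  | rel : ℕ → List ETerm → EFormula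
  | not : EFormula → EFormula
  | and : EFormula → EFormula → EFormula
  | or : EFormula → EFormula → EFormula

def EFormula.imp (φ ψ : EFormula) : EFormula := .or (.not φ) ψ

/-- `sat Rel S true φ` is `S ⊨ φ`; `sat Rel S false φ` is `S ⊨ ¬φ`. -/
def sat (Rel : ℕ → List ℕ → Bool) (S : EpsSubst) : Bool → EFormula → Prop
  | b, .rel r ts => ∃ ns : List ℕ, ts.map (eval S) = ns.map numeral ∧ Rel r ns = b
  | b, .not φ => sat Rel S (!b) φ
  | true, .and φ ψ => sat Rel S true φ ∧ sat Rel S true ψ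
  | false, .and φ ψ => sat Rel S false φ ∨ sat Rel S false ψ
  | true, .or φ ψ => sat Rel S true φ ∨ sat Rel S true ψ
  | false, .or φ ψ => sat Rel S false φ ∧ sat Rel S false ψ

def TotalSubst (S : EpsSubst) : Prop := ∀ c ns, (S c ns).isSome

def stdExt (S : EpsSubst) : EpsSubst := fun c ns => some ((S c ns).getD none)

def Extends (S S' : EpsSubst) : Prop := ∀ c ns v, S c ns = some v → S' c ns = some v

def Decides (Rel : ℕ → List ℕ → Bool) (S : EpsSubst) (φ : EFormula) : Prop :=
  sat Rel S true φ ∨ sat Rel S false φ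


/-- All subterms of a term (including itself). -/
def ETerm.subterms : ETerm → List ETerm
  | .zero => [.zero]
  | .succ t => .succ t :: t.subterms
  | .skolem c args => .skolem c args :: args.attach.flatMap fun a => a.1.subterms
termination_by t => t
decreasing_by
  all_goals simp_wf
  all_goals exact Nat.lt_of_lt_of_le (List.sizeOf_lt_of_mem a.2) (by omega)

/-- All subterms of terms occurring in a formula. -/
def EFormula.termsIn : EFormula → List ETerm
  | .rel _ ts => ts.flatMap ETerm.subterms
  | .not φ => φ.termsIn
  | .and φ ψ => φ.termsIn ++ ψ.termsIn
  | .or φ ψ => φ.termsIn ++ ψ.termsIn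

def IsNumeral (t : ETerm) : Prop := ∃ n, t = numeral n

/-- `Unev S c args` says that `c(args)` belongs to the paper's `unev(·, S)`. -/
def Unev (S : EpsSubst) (c : ℕ) (args : List ETerm) : Prop :=
  (∀ a ∈ args, IsNumeral (eval S a)) ∧ ¬ IsNumeral (eval S (.skolem c args))

lemma List.exists_map_eq_map_of_forall_mem {α β γ : Type*} {f : α → β} {g : γ → β} {l : List α}
    (h : ∀ a ∈ l, ∃ c, f a = g c) : ∃ cs : List γ, l.map f = cs.map g := by
  induction l with
  | nil => exact ⟨[], rfl⟩
  | cons a l ih =>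
    obtain ⟨c, hc⟩ := h a List.mem_cons_self
    obtain ⟨cs, hcs⟩ := ih fun b hb => h b (List.mem_cons_of_mem a hb)
    exact ⟨c :: cs, by simp [hc, hcs]⟩

namespace ETerm

lemma self_mem_subterms_skolem (c : ℕ) (args : List ETerm) :
    skolem c args ∈ (skolem c args).subterms := by
  simp [subterms]

lemma mem_subterms_succ {s t : ETerm} (h : s ∈ t.subterms) : s ∈ (succ t).subterms := by
  simp [subterms, h]

lemma mem_subterms_skolem {s a : ETerm} {c : ℕ} {args : List ETerm} (ha : a ∈ args)
    (h : s ∈ a.subterms) : s ∈ (skolem c args).subterms := by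
  simp only [subterms, List.mem_cons, List.mem_flatMap, List.mem_attach, true_and,
    Subtype.exists]
  exact Or.inr ⟨a, ha, h⟩

end ETerm

theorem exists_unev_subterm (S : EpsSubst) :
    ∀ t : ETerm, ¬ IsNumeral (eval S t) → ∃ c args, .skolem c args ∈ t.subterms ∧ Unev S c args
  | .zero, h => absurd ⟨0, by simp [eval, numeral]⟩ h
  | .succ t, h => by
    have ht : ¬ IsNumeral (eval S t) := fun ⟨n, hn⟩ => h ⟨n + 1, by simp [eval, hn, numeral]⟩
    obtain ⟨c, args, hmem, hunev⟩ := exists_unev_subterm S t ht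
    exact ⟨c, args, ETerm.mem_subterms_succ hmem, hunev⟩
  | .skolem c args, h => by
    by_cases hargs : ∀ a ∈ args, IsNumeral (eval S a)
    · exact ⟨c, args, ETerm.self_mem_subterms_skolem c args, hargs, h⟩
    · push Not at hargs
      obtain ⟨a, ha, hna⟩ := hargs
      obtain ⟨c', args', hmem, hunev⟩ := exists_unev_subterm S a hna
      exact ⟨c', args', ETerm.mem_subterms_skolem ha hmem, hunev⟩
termination_by t => t
decreasing_by
  all_goals simp_wf
  all_goals first
    | omega
    | exact Nat.lt_of_lt_of_le (List.sizeOf_lt_of_mem ha) (by omega)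

section Decides

variable {Rel : ℕ → List ℕ → Bool} {S : EpsSubst}

lemma decides_rel_of_forall_isNumeral {r : ℕ} {ts : List ETerm}
    (h : ∀ t ∈ ts, IsNumeral (eval S t)) : Decides Rel S (.rel r ts) := by
  obtain ⟨ns, hns⟩ := List.exists_map_eq_map_of_forall_mem h
  cases hr : Rel r ns
  · exact Or.inr ⟨ns, hns, hr⟩
  · exact Or.inl ⟨ns, hns, hr⟩

lemma decides_not_iff {φ : EFormula} : Decides Rel S (.not φ) ↔ Decides Rel S φ := by
  simp only [Decides, sat, Bool.not_true, Bool.not_false]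
  exact or_comm

theorem exists_unev_termsIn_of_not_decides :
    ∀ φ : EFormula, ¬ Decides Rel S φ → ∃ c args, .skolem c args ∈ φ.termsIn ∧ Unev S c args
  | .rel r ts, h => by
    have : ¬ ∀ t ∈ ts, IsNumeral (eval S t) := fun hts => h (decides_rel_of_forall_isNumeral hts)
    push Not at this
    obtain ⟨t, ht, hnt⟩ := this
    obtain ⟨c, args, hmem, hunev⟩ := exists_unev_subterm S t hnt
    exact ⟨c, args, List.mem_flatMap.mpr ⟨t, ht, hmem⟩, hunev⟩
  | .not φ, h => exists_unev_termsIn_of_not_decides φ (mt decides_not_iff.mpr h)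
  | .and φ ψ, h | .or φ ψ, h => by
    have : ¬ Decides Rel S φ ∨ ¬ Decides Rel S ψ := by
      simp only [Decides, sat] at h ⊢
      tauto
    rcases this with hφ | hψ
    · obtain ⟨c, args, hmem, hunev⟩ := exists_unev_termsIn_of_not_decides φ hφ
      exact ⟨c, args, List.mem_append_left _ hmem, hunev⟩
    · obtain ⟨c, args, hmem, hunev⟩ := exists_unev_termsIn_of_not_decides ψ hψ
      exact ⟨c, args, List.mem_append_right _ hmem, hunev⟩

end Decides

/-- If `S` does not decide the closed formula `φ`, then `unev(φ, S)` is
non-empty: some subterm `c(s⃗)` of `φ` has all `Ŝ(sᵢ)` numerals but `Ŝ(c(s⃗))`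
is not a numeral. -/
theorem stmt8 (Rel : ℕ → List ℕ → Bool) (S : EpsSubst) (φ : EFormula)
    (h : ¬ (sat Rel S true φ ∨ sat Rel S false φ)) :
    ∃ (c : ℕ) (args : List ETerm), ETerm.skolem c args ∈ φ.termsIn ∧
      (∀ a ∈ args, ∃ n : ℕ, eval S a = numeral n) ∧
      ¬ ∃ n : ℕ, eval S (ETerm.skolem c args) = numeral n :=
  exists_unev_termsIn_of_not_decides φ h
end

section
/- The path-construction process through T₁′ terminates: the sequence α₀ = ⟨⟩, with αₙ₊₁ obtained either by extending αₙ by one branch or by backtracking to a node γ ⊆ αₙ where the chosen branch was ? and replacing it with a branch labeled by a natural number, must terminate after finitely many steps whenever T₁′ is a well-founded tree. -/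
/-- One step of the path construction: either extend by one branch, or
backtrack to a `?`-labeled branch and correct it to a natural-number label. -/
def Step (x y : Node) : Prop :=
  (∃ u : Option ℕ, y = x ++ [u]) ∨
    ∃ (g : Node) (u : ℕ), (g ++ [(none : Option ℕ)]) <+: x ∧ y = g ++ [some u]

/-! For every `k` the first `k` labels of `αₙ` eventually stabilize. Once the first `k` labels are
fixed, no later correction can act below position `k` (it would change a `?` among them into a
numeral), so the label at position `k` changes at most once, from `?` to a numeral. The stable
prefixes then form an infinite branch of `T`. -/

namespace Step

variable {x y σ τ : Node}

theorem prefix_or_correction (h : Step x y) (hτ : τ <+: x) :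
    τ <+: y ∨ ∃ (g : Node) (u : ℕ), g ++ [none] <+: τ ∧ y = g ++ [some u] := by
  rcases h with ⟨u, rfl⟩ | ⟨g, u, hg, rfl⟩
  · exact Or.inl (hτ.trans (List.prefix_append _ _))
  · rcases le_or_gt τ.length g.length with hle | hlt
    · have hτg : τ <+: g :=
        List.prefix_of_prefix_length_le hτ ((List.prefix_append _ _).trans hg) hle
      exact Or.inl (hτg.trans (List.prefix_append _ _))
    · exact Or.inr ⟨g, u, List.prefix_of_prefix_length_le hg hτ (by simpa using hlt), rfl⟩

theorem prefix_append_singleton {c : Option ℕ} (h : Step x y) (hx : σ ++ [c] <+: x)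
    (hy : σ <+: y) : σ ++ [c] <+: y ∨ c = none ∧ ∃ u : ℕ, y = σ ++ [some u] := by
  rcases h.prefix_or_correction hx with hc | ⟨g, u, hg, rfl⟩
  · exact Or.inl hc
  rcases List.prefix_concat_iff.1 hg with heq | hgσ
  · obtain ⟨rfl, hc⟩ := List.append_inj' heq rfl
    exact Or.inr ⟨by simpa using hc.symm, u, rfl⟩
  · exact absurd (hgσ.trans hy) (by simp)

theorem exists_prefix_append_singleton (h : Step x y) (hx : σ <+: x) (hy : σ <+: y) :
    ∃ c : Option ℕ, σ ++ [c] <+: x ∨ σ ++ [c] <+: y := by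
  obtain ⟨t, rfl⟩ := hx
  rcases t with _ | ⟨c, t⟩
  · rcases h with ⟨u, rfl⟩ | ⟨g, u, hg, rfl⟩
    · exact ⟨u, Or.inr (by simp)⟩
    · exact absurd ((List.append_nil σ ▸ hg).trans hy) (by simp)
  · exact ⟨c, Or.inl ⟨t, by simp⟩⟩

end Step

section Stabilization

variable {a : ℕ → Node} (ha : ∀ n, Step (a n) (a (n + 1)))
include ha

theorem forall_ge_prefix_append_some {σ : Node} {u : ℕ} {n : ℕ}
    (hσ : ∀ m ≥ n, σ <+: a m) (hn : σ ++ [some u] <+: a n) :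
    ∀ m ≥ n, σ ++ [some u] <+: a m := by
  refine fun m hm ↦ Nat.le_induction hn (fun j hj ih ↦ ?_) m hm
  rcases (ha j).prefix_append_singleton ih (hσ (j + 1) (by omega)) with h | ⟨h, _⟩
  · exact h
  · cases h

theorem eventually_prefix_append_singleton {σ : Node} {c : Option ℕ} {n : ℕ}
    (hσ : ∀ m ≥ n, σ <+: a m) (hn : σ ++ [c] <+: a n) :
    ∃ d : Option ℕ, ∀ᶠ m in Filter.atTop, σ ++ [d] <+: a m := by
  cases c with
  | some u => exact ⟨some u, Filter.eventually_atTop.2 ⟨n, forall_ge_prefix_append_some ha hσ hn⟩⟩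
  | none =>
    by_cases hkeep : ∀ m ≥ n, σ ++ [none] <+: a m → σ ++ [none] <+: a (m + 1)
    · exact ⟨none, Filter.eventually_atTop.2 ⟨n, fun m hm ↦ Nat.le_induction hn hkeep m hm⟩⟩
    push Not at hkeep
    obtain ⟨m, hm, hmem, hlost⟩ := hkeep
    rcases (ha m).prefix_append_singleton hmem (hσ (m + 1) (by omega)) with h | ⟨-, u, hu⟩
    · exact absurd h hlost
    · refine ⟨some u, Filter.eventually_atTop.2 ⟨m + 1, ?_⟩⟩
      exact forall_ge_prefix_append_some ha (fun j hj ↦ hσ j (by omega)) (by simp [hu])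

theorem exists_eventually_prefix_s12 (k : ℕ) :
    ∃ σ : Node, σ.length = k ∧ ∀ᶠ n in Filter.atTop, σ <+: a n := by
  induction k with
  | zero => exact ⟨[], rfl, Filter.Eventually.of_forall fun _ ↦ List.nil_prefix⟩
  | succ k ih =>
    obtain ⟨σ, hlen, hσ⟩ := ih
    obtain ⟨N, hN⟩ := Filter.eventually_atTop.1 hσ
    obtain ⟨c, hc⟩ := (ha N).exists_prefix_append_singleton (hN N le_rfl) (hN (N + 1) (by omega))
    obtain ⟨d, hd⟩ : ∃ d : Option ℕ, ∀ᶠ m in Filter.atTop, σ ++ [d] <+: a m := by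
      rcases hc with hc | hc
      · exact eventually_prefix_append_singleton ha hN hc
      · exact eventually_prefix_append_singleton ha (fun m hm ↦ hN m (by omega)) hc
    exact ⟨σ ++ [d], by simp [hlen], hd⟩

end Stabilization

/-- The path construction through a well-founded tree terminates: there is no
infinite sequence starting at `⟨⟩` whose steps each either extend the current
node by one branch or correct a `?`-branch to a numeral branch. -/
theorem stmt12 (T : Set Node) (hT : IsTree T) (hwf : TreeWF T) :
    ¬ ∃ a : ℕ → Node, a 0 = [] ∧ (∀ n, a n ∈ T) ∧ ∀ n, Step (a n) (a (n + 1)) := by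
  rintro ⟨a, -, haT, ha⟩
  choose σ hlen hσ using exists_eventually_prefix_s12 ha
  refine hwf ⟨σ, fun k ↦ ?_, fun k ↦ ?_⟩
  · obtain ⟨n, hn⟩ := (hσ k).exists
    exact hT _ _ hn (haT n)
  · obtain ⟨n, hk, hk'⟩ := ((hσ k).and (hσ (k + 1))).exists
    refine ⟨List.prefix_of_prefix_length_le hk hk' (by simp [hlen]), fun h ↦ ?_⟩
    simpa [hlen] using congrArg List.length h
end

section
/- In a well-founded tree T over the label set ℕ ∪ {?}, the relation 'y is obtained from x either by extending x by one element, or by replacing some ?-labeled branch of x (i.e., taking γ⌢⟨u⟩ with u ∈ ℕ where γ⌢⟨?⟩ ⊆ x)' is itself well-founded: there is no infinite sequence x₀, x₁, x₂, … with each xₙ₊₁ related to xₙ. -/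
/-!
For every `p`, the length-`p` prefix of `xₙ` is eventually constant. Once the `p`-prefix is
frozen, a step can change position `p` only by correcting a `?` there to a numeral, after which
that position can never change again; so the `(p+1)`-prefix changes at most once more. The
limiting prefixes then form an infinite branch of `T`.
-/

open Filter

theorem exists_eventually_eq_of_changes_enter {β : Type*} (s : ℕ → β) (P : β → Prop) {N : ℕ}
    (h : ∀ n ≥ N, s (n + 1) = s n ∨ (¬ P (s n) ∧ P (s (n + 1)))) :
    ∃ b, ∀ᶠ n in atTop, s n = b := by
  by_cases hP : ∃ m ≥ N, P (s m)
  · obtain ⟨m, hmN, hm⟩ := hP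
    have frozen : ∀ n ≥ m, P (s n) ∧ s n = s m := by
      intro n hn
      induction n, hn using Nat.le_induction with
      | base => exact ⟨hm, rfl⟩
      | succ n hmn ih =>
        rcases h n (by omega) with heq | ⟨hnot, -⟩
        · rw [heq]; exact ih
        · exact absurd ih.1 hnot
    exact ⟨s m, eventually_atTop.2 ⟨m, fun n hn => (frozen n hn).2⟩⟩
  · push Not at hP
    refine ⟨s N, eventually_atTop.2 ⟨N, fun n hn => ?_⟩⟩
    induction n, hn using Nat.le_induction with
    | base => rfl
    | succ n hNn ih =>
      rcases h n hNn with heq | ⟨-, hin⟩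
      · rw [heq, ih]
      · exact absurd hin (hP _ (by omega))

theorem le_length_of_take_eq_of_correction {g x : Node} {u p : ℕ} (hg : g ++ [none] <+: x)
    (hp : p ≤ g.length + 1) (h : x.take p = (g ++ [some u]).take p) : p ≤ g.length := by
  by_contra hlt
  obtain rfl : p = (g ++ [none]).length := by
    simp only [List.length_append, List.length_singleton]; omega
  rw [← List.prefix_iff_eq_take.mp hg, List.take_of_length_le (by simp)] at h
  simp at h

namespace Step

variable {x y : Node} {p : ℕ}

theorem lt_length_of_take_eq (h : Step x y) (hx : p ≤ x.length) (hy : p ≤ y.length)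
    (he : x.take p = y.take p) : p < y.length := by
  rcases h with ⟨u, rfl⟩ | ⟨g, u, hg, rfl⟩
  · simp only [List.length_append, List.length_singleton]; omega
  · have := le_length_of_take_eq_of_correction hg (by simpa using hy) he
    simp only [List.length_append, List.length_singleton]; omega

theorem take_succ_eq_or_correction (h : Step x y) (hx : p < x.length) (hy : p ≤ y.length)
    (he : x.take p = y.take p) :
    y.take (p + 1) = x.take (p + 1) ∨
      ∃ (g : Node) (u : ℕ), x.take (p + 1) = g ++ [none] ∧ y.take (p + 1) = g ++ [some u] := by
  rcases h with ⟨u, rfl⟩ | ⟨g, u, hg, rfl⟩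
  · exact .inl (List.take_append_of_le_length hx)
  · have hpg := le_length_of_take_eq_of_correction hg (by simpa using hy) he
    have hxg : x.take (g.length + 1) = g ++ [none] := by
      simpa using (List.prefix_iff_eq_take.mp hg).symm
    rcases hpg.eq_or_lt with rfl | hlt
    · exact .inr ⟨g, u, hxg, List.take_of_length_le (by simp)⟩
    · left
      have hgx : g = x.take g.length :=
        List.prefix_iff_eq_take.mp ((List.prefix_append _ _).trans hg)
      rw [List.take_append_of_le_length (by omega), hgx, List.take_take, min_eq_left (by omega)]

end Step

theorem exists_eventually_take_eq {x : ℕ → Node} (hx : ∀ n, Step (x n) (x (n + 1))) (p : ℕ) :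
    ∃ b : Node, ∀ᶠ n in atTop, (x n).take p = b ∧ p ≤ (x n).length := by
  induction p with
  | zero => exact ⟨[], Eventually.of_forall fun n => by simp⟩
  | succ p ih =>
    obtain ⟨b, hb⟩ := ih
    obtain ⟨N, hN⟩ := eventually_atTop.1 hb
    have hfrozen : ∀ n ≥ N, (x n).take p = (x (n + 1)).take p := fun n hn => by
      rw [(hN n hn).1, (hN (n + 1) (by omega)).1]
    have hlen : ∀ n ≥ N + 1, p < (x n).length := fun n hn => by
      obtain ⟨m, rfl⟩ : ∃ m, n = m + 1 := ⟨n - 1, by omega⟩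
      exact (hx m).lt_length_of_take_eq (hN m (by omega)).2 (hN (m + 1) (by omega)).2
        (hfrozen m (by omega))
    -- Only a correction `g ++ [none] ↦ g ++ [some u]` at position `p` moves the `(p+1)`-prefix.
    obtain ⟨c, hc⟩ := exists_eventually_eq_of_changes_enter (fun n => (x n).take (p + 1))
      (fun t => ∃ (g : Node) (u : ℕ), t = g ++ [some u]) (N := N + 1) fun n hn => by
        rcases (hx n).take_succ_eq_or_correction (hlen n hn) (hN (n + 1) (by omega)).2
          (hfrozen n (by omega)) with heq | ⟨g, u, hnone, hsome⟩
        · exact .inl heq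
        · refine .inr ⟨?_, g, u, hsome⟩
          rintro ⟨g', u', h'⟩
          rw [hnone] at h'
          simpa using (List.append_inj' h' rfl).2
    exact ⟨c, (hc.and (eventually_ge_atTop (N + 1))).mono fun n ⟨hcn, hn⟩ =>
      ⟨hcn, hlen n hn⟩⟩

theorem sprefix_take_take_succ {s : Node} {p : ℕ} (h : p < s.length) :
    SPrefix (s.take p) (s.take (p + 1)) :=
  ⟨List.take_prefix_take_left (by omega), fun heq => by
    have := congrArg List.length heq
    simp only [List.length_take] at this; omega⟩

/-- In a well-founded tree over `ℕ ∪ {?}`, the step relation (extension by one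
element, or correction of a `?`-branch to a numeral branch) admits no infinite
sequence `x₀, x₁, x₂, …` within the tree. -/
theorem stmt13 (T : Set Node) (hT : IsTree T) (hwf : TreeWF T) :
    ¬ ∃ x : ℕ → Node, (∀ n, x n ∈ T) ∧ ∀ n, Step (x n) (x (n + 1)) := by
  rintro ⟨x, hxT, hx⟩
  choose b hb using exists_eventually_take_eq hx
  refine hwf ⟨b, fun p => ?_, fun p => ?_⟩
  · obtain ⟨n, hn, -⟩ := (hb p).exists
    exact hn ▸ hT _ _ (List.take_prefix _ _) (hxT n)
  · obtain ⟨n, ⟨hp, -⟩, hp1, hlen⟩ := ((hb p).and (hb (p + 1))).exists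
    exact hp ▸ hp1 ▸ sprefix_take_take_succ hlen
end
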